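/- Let h be a good(δ̄, N_δ̄) bijection and define S₂ := { i ∈ {1,…,N} : |i − h(i)| ≤ δ̄ }. Then for every integer k: E[ |â_k − ã_k|² ] ≤ 4·N_δ̄/N + (1/N)·Σ_{i ∈ S₂} E[ |g(t_{h(i)}) − g(t_i)|² ]. -/

import Mathlib

open MeasureTheory ProbabilityTheory Finset

noncomputable section

/-- `t` is the vector of order statistics of `N` i.i.d. samples from the uniform
distribution on the interval `[0, b]`: there exist i.i.d. random variables `u i`,
each uniformly distributed on `[0, b]`, such that for every `ω` the vector
`(t i ω)_i` is the monotone rearrangement of `(u i ω)_i`. -/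
def IsUniformOrderStats {Ω : Type*} [MeasurableSpace Ω] (μ : Measure Ω) (b : ℝ)
    {N : ℕ} (t : Fin N → Ω → ℝ) : Prop :=
  ∃ u : Fin N → Ω → ℝ,
    (∀ i, Measurable (u i)) ∧
    iIndepFun u μ ∧
    (∀ i, Measure.map (u i) μ = (ENNReal.ofReal b)⁻¹ • volume.restrict (Set.Icc 0 b)) ∧
    ∀ ω, Monotone (fun i => t i ω) ∧ ∃ σ : Equiv.Perm (Fin N), ∀ i, t i ω = u (σ i) ω

/-- A permutation `h` of `{1, …, N}` is `good(δ, Nδ)` if at most `Nδ` indices are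
moved by more than `δ`. -/
def GoodPerm {N : ℕ} (δ Nδ : ℕ) (h : Equiv.Perm (Fin N)) : Prop :=
  (Finset.univ.filter fun i : Fin N => (δ : ℤ) < |(i.1 : ℤ) - ((h i).1 : ℤ)|).card ≤ Nδ

/-- The estimated `k`-th Fourier series coefficient from samples `s 1, …, s N`
(nominally placed at locations `i/N`): `(1/N) ∑_{i=1}^N s i · e^{-2πjki/N}`. -/
def dftCoeff (N : ℕ) (s : Fin N → ℂ) (k : ℤ) : ℂ :=
  (N : ℂ)⁻¹ * ∑ i : Fin N, s i *
    Complex.exp (-(2 * (Real.pi : ℂ) * Complex.I * (k : ℂ) * ((i.1 : ℂ) + 1) / (N : ℂ)))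

/-!
The DFT weights are unimodular, so the triangle and Cauchy–Schwarz inequalities give
`|â_k − ã_k|² ≤ (1/N) ∑_i |g(t_i) − g(t_{h(i)})|²` pointwise. Since `|g| < 1`, each term has
expectation at most `4`, and at most `N_δ̄` indices lie outside `S₂`. The expectations make
sense because order statistics are measurable: `t_i ≤ a` iff more than `i` samples are `≤ a`.
-/

lemma Monotone.le_iff_lt_card_filter_le {α : Type*} [LinearOrder α] {N : ℕ} {v : Fin N → α}
    (hv : Monotone v) (i : Fin N) (a : α) : v i ≤ a ↔ i.1 < #{l | v l ≤ a} := by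
  constructor
  · intro hia
    have hsub : Iic i ⊆ ({l | v l ≤ a} : Finset (Fin N)) := fun l hl =>
      mem_filter.2 ⟨mem_univ l, (hv (mem_Iic.1 hl)).trans hia⟩
    have := card_le_card hsub
    rw [Fin.card_Iic] at this
    omega
  · intro hlt
    by_contra! hai
    have hsub : ({l | v l ≤ a} : Finset (Fin N)) ⊆ Iio i := fun l hl =>
      mem_Iio.2 (lt_of_not_ge fun hil => (hai.trans_le (hv hil)).not_ge (mem_filter.1 hl).2)
    have := card_le_card hsub
    rw [Fin.card_Iio] at this
    omega

lemma measurable_of_isUniformOrderStats {Ω : Type*} [MeasurableSpace Ω] {μ : Measure Ω}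
    {b : ℝ} {N : ℕ} {t : Fin N → Ω → ℝ} (hord : IsUniformOrderStats μ b t) (i : Fin N) :
    Measurable (t i) := by
  obtain ⟨u, hum, -, -, hsort⟩ := hord
  refine measurable_of_Iic fun a => ?_
  have hpre : t i ⁻¹' Set.Iic a = {ω | i.1 < ∑ j, if u j ω ≤ a then 1 else 0} := by
    ext ω
    obtain ⟨hmono, σ, hσ⟩ := hsort ω
    rw [Set.mem_preimage, Set.mem_Iic, hmono.le_iff_lt_card_filter_le i a]
    simp only [Set.mem_ofPred_eq, ← card_filter, hσ]
    rw [card_equiv σ (t := ({j | u j ω ≤ a} : Finset (Fin N))) fun l => by simp]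
  rw [hpre]
  exact measurableSet_lt measurable_const <| Finset.measurable_sum _ fun j _ =>
    Measurable.ite (measurableSet_le (hum j) measurable_const) measurable_const measurable_const

lemma dftCoeff_sub (N : ℕ) (s s' : Fin N → ℂ) (k : ℤ) :
    dftCoeff N s k - dftCoeff N s' k = dftCoeff N (s - s') k := by
  simp only [dftCoeff, ← mul_sub, ← sum_sub_distrib, Pi.sub_apply, sub_mul]

lemma norm_dftCoeff_le (N : ℕ) (s : Fin N → ℂ) (k : ℤ) :
    ‖dftCoeff N s k‖ ≤ (N : ℝ)⁻¹ * ∑ i, ‖s i‖ := by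
  rw [dftCoeff, norm_mul, norm_inv, Complex.norm_natCast]
  gcongr
  refine (norm_sum_le _ _).trans_eq (sum_congr rfl fun i _ => ?_)
  rw [norm_mul, Complex.norm_exp]
  simp

lemma norm_dftCoeff_sq_le (N : ℕ) (s : Fin N → ℂ) (k : ℤ) :
    ‖dftCoeff N s k‖ ^ 2 ≤ (N : ℝ)⁻¹ * ∑ i, ‖s i‖ ^ 2 :=
  calc ‖dftCoeff N s k‖ ^ 2 ≤ ((N : ℝ)⁻¹ * ∑ i, ‖s i‖) ^ 2 := by
        gcongr; exact norm_dftCoeff_le N s k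
    _ = (N : ℝ)⁻¹ ^ 2 * (∑ i, ‖s i‖) ^ 2 := mul_pow _ _ _
    _ ≤ (N : ℝ)⁻¹ ^ 2 * (N * ∑ i, ‖s i‖ ^ 2) := by
        gcongr; simpa using sq_sum_le_card_mul_sum_sq (s := univ) (f := fun i => ‖s i‖)
    _ = (N : ℝ)⁻¹ * ∑ i, ‖s i‖ ^ 2 := by
        rcases eq_or_ne (N : ℝ) 0 with hN | hN
        · simp [hN]
        · field_simp

lemma integral_norm_dftCoeff_sq_le {Ω : Type*} [MeasurableSpace Ω] {μ : Measure Ω} {N : ℕ}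
    {X : Fin N → Ω → ℂ} (hX : ∀ i, Integrable (fun ω => ‖X i ω‖ ^ 2) μ) (k : ℤ) :
    ∫ ω, ‖dftCoeff N (fun i => X i ω) k‖ ^ 2 ∂μ ≤ (N : ℝ)⁻¹ * ∑ i, ∫ ω, ‖X i ω‖ ^ 2 ∂μ := by
  rw [← integral_finsetSum _ fun i _ => hX i, ← integral_const_mul]
  exact integral_mono_of_nonneg (ae_of_all _ fun ω => by positivity)
    ((integrable_finsetSum _ fun i _ => hX i).const_mul _)
    (ae_of_all _ fun ω => norm_dftCoeff_sq_le N _ k)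

lemma GoodPerm.sum_le {N δ Nδ : ℕ} {h : Equiv.Perm (Fin N)} (hgood : GoodPerm δ Nδ h)
    {a : Fin N → ℝ} {C : ℝ} (hC : 0 ≤ C) (ha : ∀ i, a i ≤ C) :
    ∑ i, a i ≤ C * Nδ + ∑ i ∈ univ.filter fun i : Fin N => |(i.1 : ℤ) - ((h i).1 : ℤ)| ≤ δ,
      a i := by
  rw [← sum_filter_not_add_sum_filter univ fun i : Fin N => |(i.1 : ℤ) - ((h i).1 : ℤ)| ≤ δ]
  gcongr
  simp only [not_le]
  calc _ ≤ _ := sum_le_card_nsmul _ _ C fun i _ => ha i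
    _ ≤ C * Nδ := by rw [nsmul_eq_mul, mul_comm]; gcongr; exact Nat.cast_le.2 hgood

/-- For a `good(δ̄, N_δ̄)` permutation `h` and
`S₂ = {i : |i − h(i)| ≤ δ̄}`, for every integer `k`,
`E[|â_k − ã_k|²] ≤ 4 N_δ̄/N + (1/N) ∑_{i ∈ S₂} E[|g(t_{h(i)}) − g(t_i)|²]`. -/
theorem misordering_coefficient_bound (N : ℕ) (Ω : Type) [MeasurableSpace Ω]
    (μ : Measure Ω) [IsProbabilityMeasure μ] (t : Fin N → Ω → ℝ) (g : ℝ → ℂ)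
    (h : Equiv.Perm (Fin N)) (δ Nδ : ℕ)
    (hord : IsUniformOrderStats μ 1 t)
    (hgm : Measurable g)
    (hbd : ∀ x : ℝ, ‖g x‖ < 1)
    (hgood : GoodPerm δ Nδ h) :
    ∀ k : ℤ,
      (∫ ω, ‖dftCoeff N (fun i => g (t i ω)) k
          - dftCoeff N (fun i => g (t (h i) ω)) k‖ ^ 2 ∂μ)
        ≤ 4 * (Nδ : ℝ) / N + (1 / (N : ℝ)) *
            ∑ i ∈ Finset.univ.filter
              (fun i : Fin N => |(i.1 : ℤ) - ((h i).1 : ℤ)| ≤ (δ : ℤ)),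
              ∫ ω, ‖g (t (h i) ω) - g (t i ω)‖ ^ 2 ∂μ := by
  intro k
  set X : Fin N → Ω → ℂ := fun i ω => g (t i ω) - g (t (h i) ω)
  have hX_sq_le : ∀ i ω, ‖X i ω‖ ^ 2 ≤ 4 := fun i ω => by
    have : ‖X i ω‖ ≤ 2 :=
      (norm_sub_le _ _).trans (by linarith [hbd (t i ω), hbd (t (h i) ω)])
    nlinarith [norm_nonneg (X i ω)]
  have hX_meas : ∀ i, Measurable (X i) := fun i =>
    (hgm.comp (measurable_of_isUniformOrderStats hord i)).sub
      (hgm.comp (measurable_of_isUniformOrderStats hord (h i)))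
  have hX_int : ∀ i, Integrable (fun ω => ‖X i ω‖ ^ 2) μ := fun i =>
    .of_bound ((hX_meas i).norm.pow_const 2).aestronglyMeasurable 4
      (ae_of_all _ fun ω => by simpa using hX_sq_le i ω)
  have hX_int_le : ∀ i, ∫ ω, ‖X i ω‖ ^ 2 ∂μ ≤ 4 := fun i =>
    (integral_mono (hX_int i) (integrable_const _) (hX_sq_le i)).trans_eq (by simp)
  calc _ = ∫ ω, ‖dftCoeff N (fun i => X i ω) k‖ ^ 2 ∂μ := by simp only [dftCoeff_sub]; rfl
    _ ≤ (N : ℝ)⁻¹ * ∑ i, ∫ ω, ‖X i ω‖ ^ 2 ∂μ := integral_norm_dftCoeff_sq_le hX_int k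
    _ ≤ (N : ℝ)⁻¹ * (4 * Nδ + ∑ i ∈ univ.filter
          (fun i : Fin N => |(i.1 : ℤ) - ((h i).1 : ℤ)| ≤ (δ : ℤ)), ∫ ω, ‖X i ω‖ ^ 2 ∂μ) := by
        gcongr; exact hgood.sum_le (by norm_num) hX_int_le
    _ = _ := by simp only [X, norm_sub_rev]; ring
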